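/- arXiv:2303.15186 — 8 statements merged into one kernel-verified Lean document; each statement's English description precedes it below -/
import Mathlib

section
/- Let N ≥ 2 and let a, b ∈ ℂ be nonzero. Then every eigenvalue of M(a,b,N) is real if and only if a b is a positive real number (i.e., Im(a b) = 0 and Re(a b) > 0). -/
/-!
Conjugation by `diag(r^i)` turns `M(a,b,N)` into `M(r a, b / r, N)`, so for `a b ≠ 0` the spectrum
depends only on `a b`. Writing `a b = c²`, the spectrum of `M(a,b,N)` is that of `c • M(1,1,N)`,
i.e. `c` times the real spectrum of the nonzero real symmetric matrix `M(1,1,N)`. It is therefore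
real iff `c` is real, i.e. iff `c² = a b` is a positive real number.
-/

open Matrix

/-- The open-boundary Hamiltonian of the complex Hatano–Nelson model on `N` sites:
zero diagonal, subdiagonal entries `a` (`M_{i+1,i} = a`), superdiagonal entries `b`
(`M_{i,i+1} = b`), all other entries zero. -/
def hatanoNelson (N : ℕ) (a b : ℂ) : Matrix (Fin N) (Fin N) ℂ :=
  Matrix.of fun i j =>
    if (i : ℕ) = (j : ℕ) + 1 then a
    else if (j : ℕ) = (i : ℕ) + 1 then b
    else 0

theorem Matrix.charpoly_mul_mul_of_mul_eq_one {n R : Type*} [Fintype n] [DecidableEq n]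
    [CommRing R] {P Q : Matrix n n R} (h : Q * P = 1) (M : Matrix n n R) :
    (P * M * Q).charpoly = M.charpoly := by
  rw [mul_assoc, charpoly_mul_comm, mul_assoc, h, mul_one]

theorem Matrix.IsHermitian.spectrum_smul_subset_im_eq_zero_iff {n : Type*} [Fintype n]
    [DecidableEq n] {A : Matrix n n ℂ} (hA : A.IsHermitian) (hA0 : A ≠ 0) (c : ℂ) :
    spectrum ℂ (c • A) ⊆ {μ | μ.im = 0} ↔ c.im = 0 := by
  obtain ⟨i, hi⟩ : ∃ i, hA.eigenvalues i ≠ 0 := by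
    by_contra! h
    exact hA0 (hA.eigenvalues_eq_zero_iff.mp (funext h))
  have : Nonempty n := ⟨i⟩
  rw [spectrum.smul_eq_smul _ _ (hA.spectrum_eq_image_range ▸ (Set.range_nonempty _).image _),
    hA.spectrum_eq_image_range]
  simp only [Set.subset_def, Set.mem_ofPred_eq, ← Set.image_smul, Set.forall_mem_image,
    Set.forall_mem_range, smul_eq_mul, Complex.coe_algebraMap, Complex.mul_im, Complex.ofReal_re,
    Complex.ofReal_im, mul_zero, zero_add]
  exact ⟨fun h => (mul_eq_zero.mp (h i)).resolve_right hi, fun h _ => by rw [h, zero_mul]⟩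

theorem Complex.im_eq_zero_iff_mul_self_pos {c : ℂ} (hc : c ≠ 0) :
    c.im = 0 ↔ (c * c).im = 0 ∧ 0 < (c * c).re := by
  rw [Complex.mul_im, Complex.mul_re]
  constructor
  · intro h
    have hre : c.re ≠ 0 := fun h' => hc (Complex.ext h' h)
    rw [h]
    exact ⟨by ring, by simpa using mul_self_pos.mpr hre⟩
  · rintro ⟨him, hre⟩
    rcases mul_eq_zero.mp (show c.re * c.im = 0 by linarith) with h | h
    · nlinarith [h, mul_self_nonneg c.im]
    · exact h

theorem hatanoNelson_smul (N : ℕ) (c a b : ℂ) :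
    c • hatanoNelson N a b = hatanoNelson N (c * a) (c * b) := by
  ext i j
  simp only [hatanoNelson, Matrix.smul_apply, of_apply]
  split_ifs <;> simp

theorem conjTranspose_hatanoNelson (N : ℕ) (a b : ℂ) :
    (hatanoNelson N a b)ᴴ = hatanoNelson N (star b) (star a) := by
  ext i j
  simp only [hatanoNelson, conjTranspose_apply, of_apply]
  split_ifs <;> first | omega | rfl | simp

theorem isHermitian_hatanoNelson_one_one (N : ℕ) : (hatanoNelson N 1 1).IsHermitian := by
  rw [IsHermitian, conjTranspose_hatanoNelson, star_one]

theorem hatanoNelson_ne_zero {N : ℕ} (hN : 2 ≤ N) {a : ℂ} (ha : a ≠ 0) (b : ℂ) :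
    hatanoNelson N a b ≠ 0 := by
  intro h
  have := congrFun (congrFun h ⟨1, hN⟩) ⟨0, by omega⟩
  simp [hatanoNelson, ha] at this

theorem diagonal_mul_hatanoNelson_mul_diagonal (N : ℕ) (a b : ℂ) {r : ℂ} (hr : r ≠ 0) :
    diagonal (fun i : Fin N => r ^ (i : ℕ)) * hatanoNelson N a b *
      diagonal (fun i : Fin N => r⁻¹ ^ (i : ℕ)) = hatanoNelson N (r * a) (r⁻¹ * b) := by
  ext i j
  simp only [diagonal_mul, mul_diagonal, hatanoNelson, of_apply]
  split_ifs with h1 h2 <;> (try rw [h1]) <;> (try rw [h2]) <;> simp only [inv_pow] <;>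
    field_simp <;> ring

theorem charpoly_hatanoNelson_mul_inv (N : ℕ) (a b : ℂ) {r : ℂ} (hr : r ≠ 0) :
    (hatanoNelson N (r * a) (r⁻¹ * b)).charpoly = (hatanoNelson N a b).charpoly := by
  rw [← diagonal_mul_hatanoNelson_mul_diagonal N a b hr]
  refine charpoly_mul_mul_of_mul_eq_one ?_ _
  rw [diagonal_mul_diagonal, ← diagonal_one]
  congr 1
  ext i
  rw [← mul_pow, inv_mul_cancel₀ hr, one_pow]

theorem charpoly_hatanoNelson_eq_of_mul_eq (N : ℕ) {a b a' b' : ℂ} (ha : a ≠ 0) (ha' : a' ≠ 0)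
    (h : a * b = a' * b') :
    (hatanoNelson N a b).charpoly = (hatanoNelson N a' b').charpoly := by
  rw [← charpoly_hatanoNelson_mul_inv N a b (div_ne_zero ha' ha)]
  congr 2
  · field_simp
  · field_simp
    linear_combination h

/-- For `N ≥ 2` and nonzero `a, b ∈ ℂ`, every eigenvalue of the Hatano–Nelson
matrix (every root of its characteristic polynomial) is real if and only if
`ab` is a positive real number. -/
theorem hatanoNelson_real_spectrum_iff (N : ℕ) (hN : 2 ≤ N) (a b : ℂ)
    (ha : a ≠ 0) (hb : b ≠ 0) :
    (∀ μ : ℂ, ((hatanoNelson N a b).charpoly).IsRoot μ → μ.im = 0) ↔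
      ((a * b).im = 0 ∧ 0 < (a * b).re) := by
  obtain ⟨c, hc⟩ := IsAlgClosed.exists_eq_mul_self (a * b)
  have hc0 : c ≠ 0 := by
    rintro rfl
    exact mul_ne_zero ha hb (by rwa [mul_zero] at hc)
  have hcharpoly : (hatanoNelson N a b).charpoly = (c • hatanoNelson N 1 1).charpoly := by
    rw [hatanoNelson_smul, mul_one, charpoly_hatanoNelson_eq_of_mul_eq N ha hc0 hc]
  simp_rw [hcharpoly, ← mem_spectrum_iff_isRoot_charpoly, hc,
    ← Complex.im_eq_zero_iff_mul_self_pos hc0]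
  exact (isHermitian_hatanoNelson_one_one N).spectrum_smul_subset_im_eq_zero_iff
    (hatanoNelson_ne_zero hN one_ne_zero 1) c
end

section
/- Let t_l, t_r > 0 be real and let E ∈ ℂ. The two roots β₊, β₋ of the quadratic t_r z² − E z + t_l = 0 satisfy |β₊| = |β₋| if and only if E is real and |E| ≤ 2√(t_l t_r); moreover, when this holds, |β₊| = |β₋| = √(t_l/t_r). Consequently the OBC spectrum of the Hatano–Nelson model is the real interval [−2√(t_l t_r), 2√(t_l t_r)]. -/
/-!
By Vieta, `β₊ β₋ = t_l / t_r > 0`, so `|β₊| = |β₋|` forces `|β₊|² = t_l / t_r = β₊ β₋`, i.e.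
`β₋ = conj β₊`. Conjugate roots are exactly the case where `β₊ + β₋ = E / t_r` is real and the
discriminant `(β₊ - β₋)² = (β₊ + β₋)² - 4 β₊ β₋` is a nonpositive real, which unwinds to
`E ∈ ℝ`, `E² ≤ 4 t_l t_r`. Every `E` is realised because `ℂ` is algebraically closed.
-/

open Complex ComplexConjugate

theorem eq_mul_add_and_eq_mul_mul_of_forall_eq {R : Type*} [CommRing R] {a b c p q : R}
    (h : ∀ z, a * z ^ 2 - b * z + c = a * (z - p) * (z - q)) :
    b = a * (p + q) ∧ c = a * (p * q) := by
  have h₀ := h 0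
  have h₁ := h 1
  constructor
  · linear_combination h₀ - h₁
  · linear_combination h₀

theorem exists_forall_eq_mul_sub_mul_sub {K : Type*} [Field K] [IsAlgClosed K] [NeZero (2 : K)]
    {a : K} (ha : a ≠ 0) (b c : K) :
    ∃ p q : K, ∀ z, a * z ^ 2 - b * z + c = a * (z - p) * (z - q) := by
  obtain ⟨s, hs⟩ := IsAlgClosed.exists_pow_nat_eq (b ^ 2 - 4 * a * c) two_pos
  refine ⟨(b + s) / (2 * a), (b - s) / (2 * a), fun z => ?_⟩
  field_simp
  linear_combination hs

theorem abs_mul_le_two_mul_sqrt_mul_iff {a b x : ℝ} (ha : 0 < a) (hb : 0 ≤ b) :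
    |a * x| ≤ 2 * √(b * a) ↔ x ^ 2 ≤ 4 * (b / a) := by
  rw [show 2 * √(b * a) = √(4 * (b * a)) by
      rw [Real.sqrt_mul zero_le_four, show (4 : ℝ) = 2 ^ 2 by norm_num, Real.sqrt_sq two_pos.le],
    Real.le_sqrt (abs_nonneg _) (by positivity), sq_abs, mul_div_assoc', le_div_iff₀ ha]
  constructor <;> intro h <;> nlinarith

namespace Complex

open scoped ComplexOrder

theorem norm_eq_sqrt_of_norm_eq_of_mul_eq {p q : ℂ} {c : ℝ} (hc : 0 ≤ c) (hpq : p * q = c)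
    (h : ‖p‖ = ‖q‖) : ‖p‖ = √c := by
  rw [eq_comm, Real.sqrt_eq_iff_eq_sq hc (norm_nonneg p), sq, ← Real.norm_of_nonneg hc]
  nth_rw 2 [h]
  rw [← norm_mul, hpq, norm_real]

theorem norm_eq_norm_iff_eq_conj {p q : ℂ} {c : ℝ} (hc : 0 < c) (hpq : p * q = c) :
    ‖p‖ = ‖q‖ ↔ q = conj p := by
  refine ⟨fun h => ?_, fun h => h ▸ (norm_conj p).symm⟩
  have hp : p ≠ 0 := by
    rintro rfl
    exact hc.ne (by exact_mod_cast (zero_mul q).symm.trans hpq)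
  have hnormSq : normSq p = c := by
    rw [normSq_eq_norm_sq, norm_eq_sqrt_of_norm_eq_of_mul_eq hc.le hpq h, Real.sq_sqrt hc.le]
  refine mul_left_cancel₀ hp ?_
  rw [hpq, mul_conj, hnormSq]

theorem eq_conj_iff_of_mul_eq {p q : ℂ} {c : ℝ} (hpq : p * q = c) :
    q = conj p ↔ (p + q).im = 0 ∧ (p + q).re ^ 2 ≤ 4 * c := by
  constructor
  · rintro rfl
    have hnormSq : normSq p = c := by exact_mod_cast (mul_conj p).symm.trans hpq
    rw [add_conj, ofReal_im, ofReal_re, ← hnormSq, normSq_apply]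
    exact ⟨rfl, by nlinarith [sq_nonneg p.im]⟩
  · rintro ⟨him, hre⟩
    have hsum : p + q = ((p + q).re : ℂ) := ext rfl (by simp [him])
    have hdisc : (p - q) ^ 2 = (((p + q).re ^ 2 - 4 * c : ℝ) : ℂ) := by
      push_cast
      rw [← hsum]
      linear_combination (-4) * hpq
    have hdiff : (p - q).re = 0 := by
      rw [← sq_nonpos_iff, hdisc, ← ofReal_zero, real_le_real]
      linarith
    simp only [sub_re, add_im] at hdiff him
    exact ext (by simp; linarith) (by simp; linarith)

end Complex

section HatanoNelson

variable {tl tr : ℝ} {E βp βm : ℂ}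

theorem hatanoNelson_roots_mul_eq (htr : 0 < tr)
    (hfac : ∀ z : ℂ, (tr : ℂ) * z ^ 2 - E * z + (tl : ℂ) = (tr : ℂ) * (z - βp) * (z - βm)) :
    βp * βm = ((tl / tr : ℝ) : ℂ) := by
  have htr' : (tr : ℂ) ≠ 0 := ofReal_ne_zero.mpr htr.ne'
  rw [ofReal_div, eq_div_iff htr', (eq_mul_add_and_eq_mul_mul_of_forall_eq hfac).2, mul_comm]

theorem hatanoNelson_norm_eq_norm_iff (htl : 0 < tl) (htr : 0 < tr)
    (hfac : ∀ z : ℂ, (tr : ℂ) * z ^ 2 - E * z + (tl : ℂ) = (tr : ℂ) * (z - βp) * (z - βm)) :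
    ‖βp‖ = ‖βm‖ ↔ E.im = 0 ∧ |E.re| ≤ 2 * √(tl * tr) := by
  have hprod := hatanoNelson_roots_mul_eq htr hfac
  rw [norm_eq_norm_iff_eq_conj (div_pos htl htr) hprod, eq_conj_iff_of_mul_eq hprod,
    (eq_mul_add_and_eq_mul_mul_of_forall_eq hfac).1, re_ofReal_mul, im_ofReal_mul,
    mul_eq_zero, abs_mul_le_two_mul_sqrt_mul_iff htr htl.le, or_iff_right htr.ne']

end HatanoNelson

/-- For the Hatano–Nelson model with `t_l, t_r > 0`: the two roots `β₊, β₋` of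
`t_r z² − E z + t_l = 0` have equal modulus iff `E` is real with
`|E| ≤ 2√(t_l t_r)`, in which case `|β₊| = |β₋| = √(t_l/t_r)`; consequently the
OBC spectrum (the set of `E` satisfying the GBZ condition) is exactly the real
interval `[−2√(t_l t_r), 2√(t_l t_r)]`. -/
theorem hatanoNelson_OBC_spectrum (tl tr : ℝ) (htl : 0 < tl) (htr : 0 < tr)
    (E βp βm : ℂ)
    (hfac : ∀ z : ℂ, (tr : ℂ) * z ^ 2 - E * z + (tl : ℂ) =
      (tr : ℂ) * (z - βp) * (z - βm)) :
    (‖βp‖ = ‖βm‖ ↔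
      E.im = 0 ∧ |E.re| ≤ 2 * Real.sqrt (tl * tr)) ∧
    (‖βp‖ = ‖βm‖ →
      ‖βp‖ = Real.sqrt (tl / tr) ∧ ‖βm‖ = Real.sqrt (tl / tr)) ∧
    {E' : ℂ | ∃ bp bm : ℂ,
        (∀ z : ℂ, (tr : ℂ) * z ^ 2 - E' * z + (tl : ℂ) =
          (tr : ℂ) * (z - bp) * (z - bm)) ∧
        ‖bp‖ = ‖bm‖} =
      (fun x : ℝ => (x : ℂ)) ''
        Set.Icc (-(2 * Real.sqrt (tl * tr))) (2 * Real.sqrt (tl * tr)) := by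
  refine ⟨hatanoNelson_norm_eq_norm_iff htl htr hfac, fun h => ?_, ?_⟩
  · have hnorm := norm_eq_sqrt_of_norm_eq_of_mul_eq (div_pos htl htr).le
      (hatanoNelson_roots_mul_eq htr hfac) h
    exact ⟨hnorm, h ▸ hnorm⟩
  · ext E'
    constructor
    · rintro ⟨bp, bm, hfac', h⟩
      obtain ⟨him, hre⟩ := (hatanoNelson_norm_eq_norm_iff htl htr hfac').1 h
      exact ⟨E'.re, abs_le.mp hre, ext rfl (by simp [him])⟩
    · rintro ⟨x, hx, rfl⟩
      obtain ⟨bp, bm, hfac'⟩ :=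
        exists_forall_eq_mul_sub_mul_sub (ofReal_ne_zero.mpr htr.ne') (x : ℂ) (tl : ℂ)
      exact ⟨bp, bm, hfac',
        (hatanoNelson_norm_eq_norm_iff htl htr hfac').2 ⟨ofReal_im x, by simpa using abs_le.mpr hx⟩⟩
end

section
/- Let t_l, t_r > 0 be real and let β ∈ ℂ∖{0}. Set E = a₁(β) = t_l β⁻¹ + t_r β. Then the two roots of t_r z² − E z + t_l = 0 (one of which is β) have equal modulus if and only if |β| = √(t_l/t_r). Hence the generalized Brillouin zone of the Hatano–Nelson model is exactly the circle of radius √(t_l/t_r) centered at the origin, a closed loop with 0 in its interior. -/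
/-!
The product of the two roots of `t_r z² − E z + t_l` is `t_l / t_r`, so the roots `β, β'` have
equal modulus exactly when `‖β‖² = t_l / t_r`. Conversely, for any `β ≠ 0` the second root is
`t_l / (t_r β)`, whose modulus equals `‖β‖` on that circle.
-/

theorem mul_mul_eq_of_forall_quadratic_eq {R : Type*} [CommRing R] {a e c β β' : R}
    (h : ∀ z, a * z ^ 2 - e * z + c = a * (z - β) * (z - β')) : a * β * β' = c := by
  simpa using (h 0).symm

theorem quadratic_eq_mul_sub_mul_sub_div {K : Type*} [Field K] {a β : K} (ha : a ≠ 0)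
    (hβ : β ≠ 0) (c z : K) :
    a * z ^ 2 - (c * β⁻¹ + a * β) * z + c = a * (z - β) * (z - c / (a * β)) := by
  field_simp
  ring

theorem exists_root_norm_eq_iff {K : Type*} [NormedField K] {a c : K} (ha : a ≠ 0) (hc : c ≠ 0)
    (β : K) :
    (∃ β' : K, (∀ z, a * z ^ 2 - (c * β⁻¹ + a * β) * z + c = a * (z - β) * (z - β')) ∧
        ‖β‖ = ‖β'‖) ↔
      ‖a‖ * ‖β‖ ^ 2 = ‖c‖ := by
  constructor
  · rintro ⟨β', hfactor, hnorm⟩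
    rw [← mul_mul_eq_of_forall_quadratic_eq hfactor, norm_mul, norm_mul, ← hnorm, mul_assoc, sq]
  · intro hβc
    have hβ : β ≠ 0 := by
      rintro rfl
      exact hc (norm_eq_zero.mp (by simpa using hβc.symm))
    refine ⟨c / (a * β), quadratic_eq_mul_sub_mul_sub_div ha hβ c, ?_⟩
    have : ‖β‖ ≠ 0 := norm_ne_zero_iff.mpr hβ
    rw [norm_div, norm_mul, ← hβc]
    field_simp

theorem hatanoNelson_GBZ_general (tl tr : ℝ) (htl : 0 < tl) (htr : 0 < tr)
    (β : ℂ) :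
    ((∃ β' : ℂ,
        (∀ z : ℂ, (tr : ℂ) * z ^ 2 - ((tl : ℂ) * β⁻¹ + (tr : ℂ) * β) * z + (tl : ℂ) =
          (tr : ℂ) * (z - β) * (z - β')) ∧
        ‖β‖ = ‖β'‖) ↔
      ‖β‖ = Real.sqrt (tl / tr)) ∧
    {w : ℂ | w ≠ 0 ∧ ∃ w' : ℂ,
        (∀ z : ℂ, (tr : ℂ) * z ^ 2 - ((tl : ℂ) * w⁻¹ + (tr : ℂ) * w) * z + (tl : ℂ) =
          (tr : ℂ) * (z - w) * (z - w')) ∧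
        ‖w‖ = ‖w'‖} =
      Metric.sphere (0 : ℂ) (Real.sqrt (tl / tr)) := by
  have hGBZ (w : ℂ) :
      (∃ w' : ℂ,
        (∀ z : ℂ, (tr : ℂ) * z ^ 2 - ((tl : ℂ) * w⁻¹ + (tr : ℂ) * w) * z + (tl : ℂ) =
          (tr : ℂ) * (z - w) * (z - w')) ∧ ‖w‖ = ‖w'‖) ↔ ‖w‖ = Real.sqrt (tl / tr) := by
    rw [exists_root_norm_eq_iff (by exact_mod_cast htr.ne') (by exact_mod_cast htl.ne'),
      Complex.norm_real, Complex.norm_real, Real.norm_of_nonneg htr.le,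
      Real.norm_of_nonneg htl.le, @eq_comm _ ‖w‖,
      Real.sqrt_eq_iff_eq_sq (by positivity) (norm_nonneg w),
      div_eq_iff htr.ne', eq_comm, mul_comm]
  refine ⟨hGBZ β, Set.ext fun w => ?_⟩
  rw [Set.mem_ofPred_eq, hGBZ, mem_sphere_zero_iff_norm, and_iff_right_iff_imp]
  intro hw
  rw [← norm_pos_iff, hw]
  positivity

/-- For the Hatano–Nelson model with `t_l, t_r > 0` and `β ≠ 0`, setting
`E = t_l β⁻¹ + t_r β`, the two roots of `t_r z² − E z + t_l = 0` (one of which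
is `β`) have equal modulus iff `|β| = √(t_l/t_r)`. Hence the generalized
Brillouin zone is exactly the circle of radius `√(t_l/t_r)` about the origin. -/
theorem hatanoNelson_GBZ (tl tr : ℝ) (htl : 0 < tl) (htr : 0 < tr)
    (β : ℂ) (hβ : β ≠ 0) :
    ((∃ β' : ℂ,
        (∀ z : ℂ, (tr : ℂ) * z ^ 2 - ((tl : ℂ) * β⁻¹ + (tr : ℂ) * β) * z + (tl : ℂ) =
          (tr : ℂ) * (z - β) * (z - β')) ∧
        ‖β‖ = ‖β'‖) ↔
      ‖β‖ = Real.sqrt (tl / tr)) ∧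
    {w : ℂ | w ≠ 0 ∧ ∃ w' : ℂ,
        (∀ z : ℂ, (tr : ℂ) * z ^ 2 - ((tl : ℂ) * w⁻¹ + (tr : ℂ) * w) * z + (tl : ℂ) =
          (tr : ℂ) * (z - w) * (z - w')) ∧
        ‖w‖ = ‖w'‖} =
      Metric.sphere (0 : ℂ) (Real.sqrt (tl / tr)) :=
  hatanoNelson_GBZ_general tl tr htl htr β
end

section
/- Let A, B ∈ ℝ and define g(β) = β⁻¹ + A β + B β² on ℂ∖{0}. There is no nonempty bounded open set U ⊆ ℂ such that 0 ∉ closure(U) and Im(g(z)) = 0 for every z ∈ frontier(U). (This is the paper's argument that any closed loop contained in the preimage g⁻¹(ℝ) must enclose the origin: if the loop bounded a region U avoiding 0, then g would be holomorphic on U with Im(g) vanishing on the boundary, forcing g to be constant on U by the maximum principle for Im(g) and the Cauchy–Riemann equations, contradicting that g is nonconstant.) -/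
/-!
If such a `U` existed, `g` would be holomorphic on a neighbourhood of `closure U`, so the maximum
principle applied to `Im g` and `-Im g` forces `Im g = 0` on `U`. By the open mapping theorem a
holomorphic function with real values near a point is constant near it; but `g = c` near a point
makes the polynomial `1 + A z² + B z³ - c z = z (g z - c)` vanish on an open set, hence
everywhere, which fails at `z = 0`.
-/

open Complex Filter Set Topology

section MaximumPrinciple

variable {E : Type*} [NormedAddCommGroup E] [NormedSpace ℂ E] [Nontrivial E] {f : E → ℂ}
  {U : Set E} {z : E}

/-- Maximum principle for `Im f`, obtained from the one for `‖exp (-I * f)‖ = exp (Im f)`. -/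
theorem im_le_of_forall_mem_frontier_im_le (hU : Bornology.IsBounded U)
    (hf : DiffContOnCl ℂ f U) {C : ℝ} (hC : ∀ w ∈ frontier U, (f w).im ≤ C)
    (hz : z ∈ closure U) : (f z).im ≤ C := by
  have norm_exp : ∀ w, ‖exp (-I * f w)‖ = Real.exp (f w).im := fun w => by
    simp [Complex.norm_exp]
  have hd : DiffContOnCl ℂ (fun w => exp (-I * f w)) U :=
    (by fun_prop : Differentiable ℂ fun w : ℂ => exp (-I * w)).comp_diffContOnCl hf
  have := norm_le_of_forall_mem_frontier_norm_le hU hd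
    (fun w hw => (norm_exp w).trans_le (Real.exp_le_exp.2 (hC w hw))) hz
  rwa [norm_exp, Real.exp_le_exp] at this

theorem im_eq_zero_of_forall_mem_frontier_im_eq_zero (hU : Bornology.IsBounded U)
    (hf : DiffContOnCl ℂ f U) (h : ∀ w ∈ frontier U, (f w).im = 0) (hz : z ∈ closure U) :
    (f z).im = 0 := by
  have upper := im_le_of_forall_mem_frontier_im_le hU hf (fun w hw => (h w hw).le) hz
  have lower := im_le_of_forall_mem_frontier_im_le hU hf.neg (C := 0)
    (fun w hw => by simp [h w hw]) hz
  simp only [Pi.neg_apply, neg_im, neg_nonpos] at lower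
  exact le_antisymm upper lower

end MaximumPrinciple

theorem AnalyticAt.eventually_eq_of_eventually_mem {E : Type*} [NormedAddCommGroup E]
    [NormedSpace ℂ E] {g : E → ℂ} {z₀ : E} {s : Set ℂ} (hg : AnalyticAt ℂ g z₀)
    (hs : interior s = ∅) (h : ∀ᶠ z in 𝓝 z₀, g z ∈ s) : ∀ᶠ z in 𝓝 z₀, g z = g z₀ := by
  refine hg.eventually_constant_or_nhds_le_map_nhds.resolve_right fun hle => ?_
  have : g z₀ ∈ interior s := mem_interior_iff_mem_nhds.2 (hle h)
  simp [hs] at this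

theorem Complex.interior_setOf_im_eq_zero : interior {w : ℂ | w.im = 0} = ∅ := by
  have := interior_preimage_im ({0} : Set ℝ)
  rwa [interior_singleton, preimage_empty] at this

theorem not_eventually_inv_add_mul_add_mul_sq_eq (A B c z₀ : ℂ) :
    ¬ ∀ᶠ z in 𝓝 z₀, z⁻¹ + A * z + B * z ^ 2 = c := by
  intro h
  -- `p z = z * (z⁻¹ + A * z + B * z ^ 2 - c)` for `z ≠ 0`
  set p : ℂ → ℂ := fun z => 1 + A * z ^ 2 + B * z ^ 3 - c * z
  have hp : AnalyticOnNhd ℂ p univ := fun z _ => (by fun_prop : Differentiable ℂ p).analyticAt z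
  have ne_zero : ∀ᶠ z in 𝓝[≠] z₀, z ≠ 0 := by
    rcases eq_or_ne z₀ 0 with rfl | hz₀
    · exact self_mem_nhdsWithin
    · exact nhdsWithin_le_nhds (eventually_ne_nhds hz₀)
  have hzero : ∃ᶠ z in 𝓝[≠] z₀, p z = 0 :=
    ((h.filter_mono nhdsWithin_le_nhds).and ne_zero |>.mono fun z ⟨hz, hz0⟩ => by
      simp only [p]; rw [← hz]; field_simp; ring).frequently
  simpa [p] using hp.eqOn_zero_of_preconnected_of_frequently_eq_zero isPreconnected_univ
    (mem_univ z₀) hzero (mem_univ 0)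

/-- For the characteristic function `g(β) = β⁻¹ + A β + B β²` with `A, B ∈ ℝ`,
there is no nonempty bounded open set `U ⊆ ℂ` whose closure avoids the origin
and on whose whole boundary `Im g` vanishes. (Hence any closed loop contained
in the preimage `g⁻¹(ℝ)` must enclose the origin.) -/
theorem no_loop_avoiding_origin (A B : ℝ) :
    ¬ ∃ U : Set ℂ, U.Nonempty ∧ Bornology.IsBounded U ∧ IsOpen U ∧
        (0 : ℂ) ∉ closure U ∧
        ∀ z ∈ frontier U, (z⁻¹ + (A : ℂ) * z + (B : ℂ) * z ^ 2).im = 0 := by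
  rintro ⟨U, ⟨z₀, hz₀⟩, hb, ho, h0, hfr⟩
  set g : ℂ → ℂ := fun z => z⁻¹ + (A : ℂ) * z + (B : ℂ) * z ^ 2
  have hne : ∀ z ∈ closure U, z ≠ 0 := fun z hz h => h0 (h ▸ hz)
  have hg : DifferentiableOn ℂ g (closure U) :=
    ((differentiableOn_id.inv hne).add (by fun_prop)).add (by fun_prop)
  have hU : U ∈ 𝓝 z₀ := ho.mem_nhds hz₀
  have him : ∀ z ∈ U, (g z).im = 0 := fun z hz =>
    im_eq_zero_of_forall_mem_frontier_im_eq_zero hb hg.diffContOnCl hfr (subset_closure hz)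
  have hana : AnalyticAt ℂ g z₀ := (hg.mono subset_closure).analyticAt hU
  exact not_eventually_inv_add_mul_add_mul_sq_eq A B (g z₀) z₀
    (hana.eventually_eq_of_eventually_mem interior_setOf_im_eq_zero (eventually_of_mem hU him))
end

section
/- Let A, B ∈ ℝ with B ≠ 0, and consider the real cubic P(x) = 2Bx³ + Ax² − 1 (whose real roots are the real critical points of g(β) = β⁻¹ + Aβ + Bβ²). Then: (i) P has three distinct real roots if and only if A³ > 27B²; and (ii) P has exactly one real root (its other two roots forming a nonreal complex-conjugate pair) if and only if A³ < 27B². -/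
/-!
Both conditions are sign conditions on the discriminant `4 (A³ - 27 B²)` of the cubic.
A real cubic `P` has a real root `r` (intermediate value theorem), so
`P = a (X - r) (X² + p X + q)`, and then `disc P = a⁴ (r² + p r + q)² (p² - 4 q)`.
Hence the sign of `disc P` is the sign of the discriminant of the quadratic factor, which
decides whether that factor has two distinct real roots (different from `r`, since
`disc P ≠ 0`) or a pair of nonreal conjugate roots.
-/

open Filter ComplexConjugate

theorem exists_eq_sum_mul_of_discrim_pos {p q : ℝ} (h : 0 < p ^ 2 - 4 * q) :
    ∃ s t, s < t ∧ p = -(s + t) ∧ q = s * t := by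
  have hsq := Real.sq_sqrt h.le
  refine ⟨(-p - √(p ^ 2 - 4 * q)) / 2, (-p + √(p ^ 2 - 4 * q)) / 2, ?_, by ring, ?_⟩
  · linarith [Real.sqrt_pos.mpr h]
  · linear_combination hsq / 4

theorem exists_eq_re_normSq_of_discrim_neg {p q : ℝ} (h : p ^ 2 - 4 * q < 0) :
    ∃ w : ℂ, w.im ≠ 0 ∧ p = -2 * w.re ∧ q = Complex.normSq w := by
  have hd : 0 < q - p ^ 2 / 4 := by linarith
  refine ⟨⟨-p / 2, √(q - p ^ 2 / 4)⟩, (Real.sqrt_pos.mpr hd).ne', by ring, ?_⟩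
  rw [Complex.normSq_mk, Real.mul_self_sqrt hd.le]
  ring

theorem Complex.sub_mul_sub_conj (z w : ℂ) :
    (z - w) * (z - conj w) = z ^ 2 + (-2 * w.re : ℝ) * z + (normSq w : ℝ) := by
  have h₁ := add_conj w
  have h₂ := mul_conj w
  push_cast at h₁ ⊢
  linear_combination (-z) * h₁ + h₂

theorem exists_lt_lt_of_ne {r s t : ℝ} (hst : s < t) (hrs : r ≠ s) (hrt : r ≠ t) :
    ∃ x₁ x₂ x₃ : ℝ, x₁ < x₂ ∧ x₂ < x₃ ∧
      ∀ x, (x - r) * ((x - s) * (x - t)) = (x - x₁) * (x - x₂) * (x - x₃) := by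
  rcases hrs.lt_or_gt with hrs | hsr
  · exact ⟨r, s, t, hrs, hst, fun x => by ring⟩
  rcases hrt.lt_or_gt with hrt | htr
  · exact ⟨s, r, t, hsr, hrt, fun x => by ring⟩
  · exact ⟨s, t, r, hst, htr, fun x => by ring⟩

namespace Cubic

variable {R : Type*}

def eval [Semiring R] (P : Cubic R) (x : R) : R :=
  P.a * x ^ 3 + P.b * x ^ 2 + P.c * x + P.d

def ofFactors [Ring R] (a r p q : R) : Cubic R :=
  ⟨a, a * (p - r), a * (q - p * r), -(a * r * q)⟩

def compNeg [Ring R] (P : Cubic R) : Cubic R :=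
  ⟨-P.a, P.b, -P.c, P.d⟩

section CommRing

variable [CommRing R]

theorem eval_toPoly (P : Cubic R) (x : R) : P.toPoly.eval x = P.eval x := by
  simp [toPoly, eval]

theorem eval_ofFactors (a r p q x : R) :
    (ofFactors a r p q).eval x = a * (x - r) * (x ^ 2 + p * x + q) := by
  simp only [eval, ofFactors]
  ring

theorem discr_ofFactors (a r p q : R) :
    (ofFactors a r p q).discr = a ^ 4 * (r ^ 2 + p * r + q) ^ 2 * (p ^ 2 - 4 * q) := by
  simp only [discr, ofFactors]
  ring

theorem map_ofFactors {S : Type*} [CommRing S] (φ : R →+* S) (a r p q : R) :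
    (ofFactors a r p q).map φ = ofFactors (φ a) (φ r) (φ p) (φ q) := by
  simp [map, ofFactors]

theorem map_injective {S : Type*} [CommRing S] {φ : R →+* S} (hφ : Function.Injective φ) :
    Function.Injective (map φ) := by
  intro P Q h
  simp only [map, Cubic.mk.injEq, hφ.eq_iff] at h
  exact Cubic.ext h.1 h.2.1 h.2.2.1 h.2.2.2

theorem eq_of_forall_eval_eq [IsDomain R] [Infinite R] {P Q : Cubic R}
    (h : ∀ x, P.eval x = Q.eval x) : P = Q :=
  (toPoly_injective P Q).mp <| Polynomial.funext fun x => by simp only [eval_toPoly, h]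

end CommRing

theorem exists_eq_ofFactors {K : Type*} [Field K] {P : Cubic K} (ha : P.a ≠ 0) {r : K}
    (hr : P.eval r = 0) : ∃ p q, P = ofFactors P.a r p q := by
  simp only [eval] at hr
  refine ⟨P.b / P.a + r, P.c / P.a + (P.b / P.a + r) * r, Cubic.ext rfl ?_ ?_ ?_⟩ <;>
    simp only [ofFactors] <;> field_simp
  · ring
  · ring
  · linear_combination hr

theorem continuous_eval (P : Cubic ℝ) : Continuous P.eval := by
  unfold eval
  fun_prop

theorem eval_eq_compNeg_comp_neg (P : Cubic ℝ) : P.eval = P.compNeg.eval ∘ Neg.neg :=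
  funext fun x => by simp only [Function.comp, eval, compNeg]; ring

theorem tendsto_eval_atTop_atTop {P : Cubic ℝ} (ha : 0 < P.a) : Tendsto P.eval atTop atTop := by
  simpa only [eval_toPoly] using P.toPoly.tendsto_atTop_of_leadingCoeff_nonneg
    (by rw [degree_of_a_ne_zero ha.ne']; norm_num) (leadingCoeff_of_a_ne_zero ha.ne' ▸ ha.le)

theorem tendsto_eval_atTop_atBot {P : Cubic ℝ} (ha : P.a < 0) : Tendsto P.eval atTop atBot := by
  simpa only [eval_toPoly] using P.toPoly.tendsto_atBot_of_leadingCoeff_nonpos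
    (by rw [degree_of_a_ne_zero ha.ne]; norm_num) (leadingCoeff_of_a_ne_zero ha.ne ▸ ha.le)

theorem exists_eval_eq_zero {P : Cubic ℝ} (ha : P.a ≠ 0) : ∃ r, P.eval r = 0 := by
  have hneg : Tendsto (Neg.neg : ℝ → ℝ) atBot atTop := tendsto_neg_atBot_atTop
  rcases ha.lt_or_gt with ha | ha
  · refine P.continuous_eval.surjective' ?_ (tendsto_eval_atTop_atBot ha) 0
    rw [eval_eq_compNeg_comp_neg]
    exact (tendsto_eval_atTop_atTop (P := P.compNeg) (neg_pos.mpr ha)).comp hneg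
  · refine P.continuous_eval.surjective (tendsto_eval_atTop_atTop ha) ?_ 0
    rw [eval_eq_compNeg_comp_neg]
    exact (tendsto_eval_atTop_atBot (P := P.compNeg) (neg_neg_iff_pos.mpr ha)).comp hneg

theorem discr_pos_iff {P : Cubic ℝ} (ha : P.a ≠ 0) :
    0 < P.discr ↔ ∃ x₁ x₂ x₃ : ℝ, x₁ < x₂ ∧ x₂ < x₃ ∧
      ∀ x, P.eval x = P.a * (x - x₁) * (x - x₂) * (x - x₃) := by
  constructor
  · intro hd
    obtain ⟨r, hr⟩ := exists_eval_eq_zero ha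
    obtain ⟨p, q, hP⟩ := exists_eq_ofFactors ha hr
    rw [hP, discr_ofFactors] at hd
    have hr' : r ^ 2 + p * r + q ≠ 0 := fun h => by simp [h] at hd
    obtain ⟨s, t, hst, rfl, rfl⟩ := exists_eq_sum_mul_of_discrim_pos
      (pos_of_mul_pos_right hd (by positivity))
    have hroot : r ^ 2 + -(s + t) * r + s * t = (r - s) * (r - t) := by ring
    rw [hroot, mul_ne_zero_iff, sub_ne_zero, sub_ne_zero] at hr'
    obtain ⟨x₁, x₂, x₃, h₁₂, h₂₃, hx⟩ := exists_lt_lt_of_ne hst hr'.1 hr'.2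
    refine ⟨x₁, x₂, x₃, h₁₂, h₂₃, fun x => ?_⟩
    nth_rw 1 [hP]
    rw [eval_ofFactors]
    linear_combination P.a * hx x
  · rintro ⟨x₁, x₂, x₃, h₁₂, h₂₃, hx⟩
    have hP : P = ofFactors P.a x₁ (-(x₂ + x₃)) (x₂ * x₃) :=
      eq_of_forall_eval_eq fun x => by rw [hx, eval_ofFactors]; ring
    have h₁ : x₁ - x₂ ≠ 0 := sub_ne_zero.mpr h₁₂.ne
    have h₂ : x₁ - x₃ ≠ 0 := sub_ne_zero.mpr (h₁₂.trans h₂₃).ne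
    have h₃ : x₂ - x₃ ≠ 0 := sub_ne_zero.mpr h₂₃.ne
    rw [hP, discr_ofFactors]
    convert_to 0 < P.a ^ 4 * ((x₁ - x₂) * (x₁ - x₃)) ^ 2 * (x₂ - x₃) ^ 2 using 1
    · ring
    positivity

theorem discr_neg_iff {P : Cubic ℝ} (ha : P.a ≠ 0) :
    P.discr < 0 ↔ ∃ r : ℝ, ∃ w : ℂ, w.im ≠ 0 ∧
      ∀ z : ℂ, (P.map Complex.ofRealHom).eval z = P.a * (z - r) * (z - w) * (z - conj w) := by
  constructor
  · intro hd
    obtain ⟨r, hr⟩ := exists_eval_eq_zero ha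
    obtain ⟨p, q, hP⟩ := exists_eq_ofFactors ha hr
    rw [hP, discr_ofFactors] at hd
    obtain ⟨w, hw, rfl, rfl⟩ := exists_eq_re_normSq_of_discrim_neg
      (neg_of_mul_neg_right hd (by positivity))
    refine ⟨r, w, hw, fun z => ?_⟩
    nth_rw 1 [hP]
    rw [map_ofFactors, eval_ofFactors, mul_assoc _ (z - w), Complex.sub_mul_sub_conj]
    rfl
  · rintro ⟨r, w, hw, hz⟩
    have hP : P = ofFactors P.a r (-2 * w.re) (Complex.normSq w) := by
      refine map_injective (φ := Complex.ofRealHom) Complex.ofReal_injective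
        (eq_of_forall_eval_eq fun z => ?_)
      rw [hz, map_ofFactors, eval_ofFactors, mul_assoc _ (z - w), Complex.sub_mul_sub_conj]
      rfl
    rw [hP, discr_ofFactors, Complex.normSq_apply]
    convert_to P.a ^ 4 * ((r - w.re) ^ 2 + w.im ^ 2) ^ 2 * -(4 * w.im ^ 2) < 0 using 1
    · ring
    have him : 0 < w.im ^ 2 := by positivity
    exact mul_neg_of_pos_of_neg (by positivity) (by linarith)

end Cubic

/-- For `A, B ∈ ℝ`, `B ≠ 0`, the cubic `P(x) = 2Bx³ + Ax² − 1` (whose real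
roots are the real critical points of `g(β) = β⁻¹ + Aβ + Bβ²`) has:
(i) three distinct real roots iff `A³ > 27B²`; and
(ii) exactly one real root, the other two forming a nonreal complex-conjugate
pair, iff `A³ < 27B²`. -/
theorem critical_cubic_roots (A B : ℝ) (hB : B ≠ 0) :
    ((∃ x₁ x₂ x₃ : ℝ, x₁ < x₂ ∧ x₂ < x₃ ∧
        ∀ x : ℝ, 2 * B * x ^ 3 + A * x ^ 2 - 1 =
          2 * B * (x - x₁) * (x - x₂) * (x - x₃)) ↔ A ^ 3 > 27 * B ^ 2) ∧
    ((∃ r : ℝ, ∃ w : ℂ, w.im ≠ 0 ∧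
        ∀ z : ℂ, 2 * (B : ℂ) * z ^ 3 + (A : ℂ) * z ^ 2 - 1 =
          2 * (B : ℂ) * (z - (r : ℂ)) * (z - w) * (z - (starRingEnd ℂ) w)) ↔
      A ^ 3 < 27 * B ^ 2) := by
  set P : Cubic ℝ := ⟨2 * B, A, 0, -1⟩
  have ha : P.a ≠ 0 := mul_ne_zero two_ne_zero hB
  have hdiscr : P.discr = 4 * (A ^ 3 - 27 * B ^ 2) := by
    simp only [Cubic.discr, P]
    ring
  have heval : ∀ x, P.eval x = 2 * B * x ^ 3 + A * x ^ 2 - 1 := fun x => by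
    simp only [Cubic.eval, P]
    ring
  have hevalℂ : ∀ z, (P.map Complex.ofRealHom).eval z = 2 * (B : ℂ) * z ^ 3 + A * z ^ 2 - 1 :=
    fun z => by
      simp only [Cubic.eval, Cubic.map, Complex.ofRealHom_eq_coe, P]
      push_cast
      ring
  have hpos : A ^ 3 > 27 * B ^ 2 ↔ 0 < P.discr := by rw [hdiscr]; constructor <;> intro <;> linarith
  have hneg : A ^ 3 < 27 * B ^ 2 ↔ P.discr < 0 := by rw [hdiscr]; constructor <;> intro <;> linarith
  rw [hpos, hneg, Cubic.discr_pos_iff ha, Cubic.discr_neg_iff ha]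
  simp [heval, hevalℂ, P]
end

section
/- Let A, B ∈ ℝ with B > 0 and A³ > 27B², and let x₁ < x₂ < x₃ be the three real roots of 2Bx³ + Ax² − 1 = 0 (with x₂ < 0 < x₃). For every real E with g(x₂) < E < g(x₃), the cubic Q_E(z) = Bz³ + Az² − Ez + 1 has exactly one real root r and a pair of nonreal complex-conjugate roots w and w̄, and these satisfy |w| = |w̄| < |r|. In particular the two smallest-modulus roots of Q_E have equal modulus, so every such E satisfies the GBZ condition and belongs to the OBC spectrum. -/
/-!
Expanding `Q_E` around a critical point `c` of `g` gives
`Q_E(x) = B (x - c)² (x + 1/(B c²)) + (g(c) - E) x`.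
With `c = x₃` this shows `Q_E > 0` on `(0, ∞)`; with `c = x₂` it forces every (necessarily
negative) real root `ρ` below `-1/(B x₂²)`, and since `-1 < B x₂³` this gives `B ρ³ < -1`.
Three real roots with product `-1/B` cannot all satisfy this, so `Q_E` has one real root `r` and
a conjugate pair `w, w̄`; then `|w|² = -1/(B r) < r²`, again because `B r³ < -1`.
-/

open ComplexConjugate

/-- The characteristic function `g` of the model. -/
noncomputable def hnSymbol (A B x : ℝ) : ℝ := 1 / x + A * x + B * x ^ 2

/-- `Q_E`, which equals `z (g(z) - E)` for `z ≠ 0`. -/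
def hnCubic {K : Type*} [Field K] (A B E z : K) : K := B * z ^ 3 + A * z ^ 2 - E * z + 1

theorem hnCubic_zero {K : Type*} [Field K] (A B E : K) : hnCubic A B E 0 = 1 := by
  simp [hnCubic]

theorem hnCubic_ofReal (A B E x : ℝ) :
    ((hnCubic A B E x : ℝ) : ℂ) = hnCubic (A : ℂ) B E x := by
  simp [hnCubic]

theorem hnCubic_eq_mul_quadratic {K : Type*} [Field K] {A B E r : K} (hB : B ≠ 0) (hr : r ≠ 0)
    (hroot : hnCubic A B E r = 0) (z : K) :
    hnCubic A B E z = B * (z - r) * (z ^ 2 + (A / B + r) * z - 1 / (B * r)) := by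
  unfold hnCubic at hroot ⊢
  field_simp
  linear_combination z * hroot

theorem exists_neg_hnCubic_eq_zero (A E : ℝ) {B : ℝ} (hB : 0 < B) :
    ∃ r < 0, hnCubic A B E r = 0 := by
  set t := 1 + (|A| + |E| + 1) / B
  have ht : 1 ≤ t := le_add_of_nonneg_right (by positivity)
  have hBt : B * t = B + |A| + |E| + 1 := by
    simp only [t]; field_simp; ring
  have hneg : hnCubic A B E (-t) < 0 := by
    have hA : A * t ^ 2 ≤ |A| * t ^ 2 := mul_le_mul_of_nonneg_right (le_abs_self A) (sq_nonneg t)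
    have hE : E * t ≤ |E| * t ^ 2 := by
      calc E * t ≤ |E| * t := mul_le_mul_of_nonneg_right (le_abs_self E) (by linarith)
        _ ≤ |E| * t ^ 2 := mul_le_mul_of_nonneg_left (by nlinarith) (abs_nonneg E)
    have hcube : B * t ^ 3 = (B + |A| + |E| + 1) * t ^ 2 := by rw [← hBt]; ring
    simp only [hnCubic]
    nlinarith [mul_pos hB (by positivity : (0 : ℝ) < t ^ 2)]
  obtain ⟨r, hr, hroot⟩ := intermediate_value_Icc (by linarith : -t ≤ 0)
    (by unfold hnCubic; fun_prop : Continuous (hnCubic A B E)).continuousOn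
    ⟨hneg.le, by simp [hnCubic_zero]⟩
  refine ⟨r, lt_of_le_of_ne hr.2 ?_, hroot⟩
  rintro rfl
  simp [hnCubic_zero] at hroot

/-- Expansion of `Q_E` around a critical point `c` of `g`: the double factor `(x - c)²` appears
because `Q_E(x) - (g(c) - E) x = x (g(x) - g(c))` vanishes to second order at `c`. -/
theorem hnCubic_eq_at_critical {A B c : ℝ} (hB : B ≠ 0) (hc : c ≠ 0)
    (hcrit : 2 * B * c ^ 3 + A * c ^ 2 - 1 = 0) (E x : ℝ) :
    hnCubic A B E x = B * (x - c) ^ 2 * (x + 1 / (B * c ^ 2)) + (hnSymbol A B c - E) * x := by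
  unfold hnCubic hnSymbol
  field_simp
  linear_combination (x ^ 2 - x * c) * hcrit

theorem hnCubic_pos_of_pos {A B c E x : ℝ} (hB : 0 < B) (hc : 0 < c)
    (hcrit : 2 * B * c ^ 3 + A * c ^ 2 - 1 = 0) (hE : E < hnSymbol A B c) (hx : 0 < x) :
    0 < hnCubic A B E x := by
  rw [hnCubic_eq_at_critical hB.ne' hc.ne' hcrit]
  have : 0 < x + 1 / (B * c ^ 2) := add_pos hx (by positivity)
  nlinarith [mul_nonneg (mul_nonneg hB.le (sq_nonneg (x - c))) this.le, mul_pos (sub_pos.2 hE) hx]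

theorem mul_lt_neg_one_of_hnCubic_eq_zero {A B c E x : ℝ} (hB : 0 < B) (hc : c < 0)
    (hcrit : 2 * B * c ^ 3 + A * c ^ 2 - 1 = 0) (hE : hnSymbol A B c < E) (hx : x < 0)
    (hroot : hnCubic A B E x = 0) : B * x * c ^ 2 < -1 := by
  rw [hnCubic_eq_at_critical hB.ne' hc.ne hcrit] at hroot
  have hBc : 0 < B * c ^ 2 := mul_pos hB (sq_pos_of_neg hc)
  have hlt : x + 1 / (B * c ^ 2) < 0 := by
    by_contra! hge
    nlinarith [mul_nonneg (mul_nonneg hB.le (sq_nonneg (x - c))) hge,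
      mul_pos (sub_pos.2 hE) (neg_pos.2 hx)]
  have : x * (B * c ^ 2) + 1 < 0 := by
    have := mul_neg_of_neg_of_pos hlt hBc
    rwa [add_mul, one_div_mul_cancel hBc.ne'] at this
  linarith

/-- The root `x₁ < x₂` forces `x₂` onto the decreasing branch of `2Bx³ + Ax² - 1`, to the right
of its local maximum at `-A/(3B)`; there `Ax₂² > -3Bx₂³`. -/
theorem neg_one_lt_mul_cube_of_critical {A B x₁ x₂ : ℝ} (hB : 0 < B) (h12 : x₁ < x₂)
    (hx₂ : x₂ < 0) (h₁ : 2 * B * x₁ ^ 3 + A * x₁ ^ 2 - 1 = 0)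
    (h₂ : 2 * B * x₂ ^ 3 + A * x₂ ^ 2 - 1 = 0) : -1 < B * x₂ ^ 3 := by
  have hslope : 0 < 3 * B * x₂ + A := by
    by_contra! hA
    have hsum : 2 * B * (x₁ ^ 2 + x₁ * x₂ + x₂ ^ 2) + A * (x₁ + x₂) = 0 := by
      have : (x₁ - x₂) * (2 * B * (x₁ ^ 2 + x₁ * x₂ + x₂ ^ 2) + A * (x₁ + x₂)) = 0 := by
        linear_combination h₁ - h₂
      exact (mul_eq_zero.1 this).resolve_left (sub_ne_zero.2 h12.ne)
    nlinarith [mul_pos hB (mul_pos_of_neg_of_neg (sub_neg.2 h12) (by linarith : 2 * x₁ + x₂ < 0)),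
      mul_nonneg_of_nonpos_of_nonpos hA (by linarith : x₁ + x₂ ≤ 0)]
  nlinarith [mul_pos hslope (pow_pos (neg_pos.2 hx₂) 2)]

theorem mul_cube_lt_neg_one_of_hnCubic_eq_zero {A B E x₁ x₂ x₃ ρ : ℝ} (hB : 0 < B)
    (h12 : x₁ < x₂) (hx₂ : x₂ < 0) (hx₃ : 0 < x₃) (h₁ : 2 * B * x₁ ^ 3 + A * x₁ ^ 2 - 1 = 0)
    (h₂ : 2 * B * x₂ ^ 3 + A * x₂ ^ 2 - 1 = 0) (h₃ : 2 * B * x₃ ^ 3 + A * x₃ ^ 2 - 1 = 0)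
    (hE₂ : hnSymbol A B x₂ < E) (hE₃ : E < hnSymbol A B x₃) (hroot : hnCubic A B E ρ = 0) :
    B * ρ ^ 3 < -1 := by
  have hρ : ρ < 0 := by
    rcases lt_trichotomy ρ 0 with hρ | rfl | hρ
    · exact hρ
    · simp [hnCubic_zero] at hroot
    · exact absurd hroot (hnCubic_pos_of_pos hB hx₃ h₃ hE₃ hρ).ne'
  have hu := mul_lt_neg_one_of_hnCubic_eq_zero hB hx₂ h₂ hE₂ hρ hroot
  have hv := neg_one_lt_mul_cube_of_critical hB h12 hx₂ h₁ h₂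
  have hv0 : B * x₂ ^ 3 < 0 := mul_neg_of_pos_of_neg hB (Odd.pow_neg (by decide) hx₂)
  have hscale : B * ρ ^ 3 * (B * x₂ ^ 3) ^ 2 = (B * ρ * x₂ ^ 2) ^ 3 := by ring
  nlinarith [mul_pos (by linarith : 0 < -(B * ρ * x₂ ^ 2) - 1)
    (by nlinarith : 0 < (B * ρ * x₂ ^ 2) ^ 2)]

theorem discrim_hnCubic_quadratic_factor_neg {A B E r : ℝ} (hB : 0 < B)
    (hr : hnCubic A B E r = 0)
    (hroots : ∀ ρ, hnCubic A B E ρ = 0 → B * ρ ^ 3 < -1) :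
    discrim 1 (A / B + r) (-1 / (B * r)) < 0 := by
  have hr0 : r ≠ 0 := by
    rintro rfl
    simp [hnCubic_zero] at hr
  by_contra! hdisc
  obtain ⟨v, hv⟩ := exists_quadratic_eq_zero one_ne_zero
    ⟨Real.sqrt _, (Real.mul_self_sqrt hdisc).symm⟩
  set v' := -(A / B + r) - v
  have hv' : 1 * (v' * v') + (A / B + r) * v' + -1 / (B * r) = 0 := by
    linear_combination hv
  have hroot_of {x : ℝ} (hx : 1 * (x * x) + (A / B + r) * x + -1 / (B * r) = 0) :
      hnCubic A B E x = 0 := by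
    rw [hnCubic_eq_mul_quadratic hB.ne' hr0 hr]
    linear_combination B * (x - r) * hx
  have hvieta : v * v' = -1 / (B * r) := by linear_combination -hv
  have hprod : B * r * v * v' = -1 := by
    rw [mul_assoc (B * r), hvieta]
    field_simp
  have h₁ := hroots r hr
  have h₂ := hroots v (hroot_of hv)
  have h₃ := hroots v' (hroot_of hv')
  have hcube : (B * r ^ 3) * (B * v ^ 3) * (B * v' ^ 3) = -1 := by
    linear_combination (B * r * v * v') ^ 2 * hprod - (B * r * v * v') * hprod + hprod
  nlinarith [mul_pos (by linarith : 0 < -(B * r ^ 3) - 1) (by linarith : 0 < -(B * v ^ 3) - 1)]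

theorem exists_conj_roots_of_discrim_neg {p q : ℝ} (hdisc : discrim 1 p q < 0) :
    ∃ w : ℂ, w.im ≠ 0 ∧ ‖w‖ ^ 2 = q ∧ ∀ z : ℂ, z ^ 2 + p * z + q = (z - w) * (z - conj w) := by
  rw [discrim, mul_one] at hdisc
  set d := Real.sqrt (4 * q - p ^ 2)
  have hd : d ^ 2 = 4 * q - p ^ 2 := Real.sq_sqrt (by linarith)
  have hd0 : 0 < d := Real.sqrt_pos.2 (by linarith)
  refine ⟨⟨-p / 2, d / 2⟩, by simp only; positivity, ?_, fun z => ?_⟩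
  · rw [Complex.sq_norm, Complex.normSq_mk]
    linear_combination hd / 4
  · apply Complex.ext <;> simp [pow_two] <;> nlinarith [hd]

theorem gbz_condition_between_critical_values_general (A B : ℝ) (hB : 0 < B)
    (x₁ x₂ x₃ : ℝ) (h12 : x₁ < x₂) (hx2 : x₂ < 0) (hx3 : 0 < x₃)
    (hroots : ∀ x : ℝ, 2 * B * x ^ 3 + A * x ^ 2 - 1 = 0 ↔ (x = x₁ ∨ x = x₂ ∨ x = x₃))
    (E : ℝ) (hE1 : 1 / x₂ + A * x₂ + B * x₂ ^ 2 < E)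
    (hE2 : E < 1 / x₃ + A * x₃ + B * x₃ ^ 2) :
    ∃ r : ℝ, ∃ w : ℂ, w.im ≠ 0 ∧
      (∀ z : ℂ, (B : ℂ) * z ^ 3 + (A : ℂ) * z ^ 2 - (E : ℂ) * z + 1 =
        (B : ℂ) * (z - (r : ℂ)) * (z - w) * (z - (starRingEnd ℂ) w)) ∧
      ‖w‖ = ‖(starRingEnd ℂ) w‖ ∧
      ‖w‖ < |r| := by
  have hreal (ρ : ℝ) (hρ : hnCubic A B E ρ = 0) : B * ρ ^ 3 < -1 :=
    mul_cube_lt_neg_one_of_hnCubic_eq_zero hB h12 hx2 hx3 ((hroots x₁).2 (by simp))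
      ((hroots x₂).2 (by simp)) ((hroots x₃).2 (by simp)) hE1 hE2 hρ
  obtain ⟨r, hr0, hr⟩ := exists_neg_hnCubic_eq_zero A E hB
  obtain ⟨w, hw_im, hw_norm, hw⟩ :=
    exists_conj_roots_of_discrim_neg (discrim_hnCubic_quadratic_factor_neg hB hr hreal)
  have hfac (z : ℂ) : hnCubic (A : ℂ) B E z = B * (z - r) * (z - w) * (z - conj w) := by
    have hrC : hnCubic (A : ℂ) B E r = 0 := by rw [← hnCubic_ofReal, hr, Complex.ofReal_zero]
    rw [hnCubic_eq_mul_quadratic (by exact_mod_cast hB.ne') (by exact_mod_cast hr0.ne) hrC,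
      mul_assoc _ (z - w), ← hw z]
    push_cast
    ring
  have hnorm_sq : ‖w‖ ^ 2 < |r| ^ 2 := by
    rw [hw_norm, sq_abs, div_lt_iff_of_neg (mul_neg_of_pos_of_neg hB hr0)]
    linarith [hreal r hr]
  exact ⟨r, w, hw_im, hfac, (Complex.norm_conj w).symm,
    lt_of_pow_lt_pow_left₀ 2 (abs_nonneg r) hnorm_sq⟩

/-- Let `B > 0`, `A³ > 27B²`, and let `x₁ < x₂ < x₃` (with `x₂ < 0 < x₃`) be
the three real roots of `2Bx³ + Ax² − 1 = 0`. For every real `E` with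
`g(x₂) < E < g(x₃)` (where `g(x) = 1/x + Ax + Bx²`), the cubic
`Q_E(z) = Bz³ + Az² − Ez + 1` has exactly one real root `r` and a pair of
nonreal complex-conjugate roots `w, w̄`, and `|w| = |w̄| < |r|`: the two
smallest-modulus roots have equal modulus, so `E` satisfies the GBZ condition. -/
theorem gbz_condition_between_critical_values (A B : ℝ) (hB : 0 < B)
    (h : A ^ 3 > 27 * B ^ 2)
    (x₁ x₂ x₃ : ℝ) (h12 : x₁ < x₂) (h23 : x₂ < x₃) (hx2 : x₂ < 0) (hx3 : 0 < x₃)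
    (hroots : ∀ x : ℝ, 2 * B * x ^ 3 + A * x ^ 2 - 1 = 0 ↔ (x = x₁ ∨ x = x₂ ∨ x = x₃))
    (E : ℝ) (hE1 : 1 / x₂ + A * x₂ + B * x₂ ^ 2 < E)
    (hE2 : E < 1 / x₃ + A * x₃ + B * x₃ ^ 2) :
    ∃ r : ℝ, ∃ w : ℂ, w.im ≠ 0 ∧
      (∀ z : ℂ, (B : ℂ) * z ^ 3 + (A : ℂ) * z ^ 2 - (E : ℂ) * z + 1 =
        (B : ℂ) * (z - (r : ℂ)) * (z - w) * (z - (starRingEnd ℂ) w)) ∧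
      ‖w‖ = ‖(starRingEnd ℂ) w‖ ∧
      ‖w‖ < |r| :=
  gbz_condition_between_critical_values_general A B hB x₁ x₂ x₃ h12 hx2 hx3 hroots E hE1 hE2
end

section
/- Let A, B ∈ ℝ with B > 0 and A³ > 27B², and let x₁ < x₂ < x₃ be the three real roots of 2Bx³ + Ax² − 1 = 0. For every real E with g(x₁) < E < g(x₂), and also for every real E with E > g(x₃), all three roots of the cubic Q_E(z) = Bz³ + Az² − Ez + 1 are real. -/
/-!
Since `Q_E(x) = x (g(x) - E)` for `x ≠ 0`, the sign of `Q_E` at a real point is read off from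
`g`. Vieta's formulas for `2Bx³ + Ax² - 1` (no linear term, positive product of roots) force
`x₁ < x₂ < 0 < x₃`. In the first range `Q_E` is negative near `-∞`, positive at `x₁`, negative
at `x₂` and positive at `0`; in the second it is negative near `-∞`, positive at `0`, negative at
`x₃` and positive near `+∞`. The intermediate value theorem gives three distinct real roots, and
a cubic with three distinct roots factors through them.
-/

open Filter Polynomial

section Vieta

variable {K : Type*} [Field K] {b c d e r₁ r₂ r₃ : K}

theorem cubic_vieta (h₁₂ : r₁ ≠ r₂) (h₁₃ : r₁ ≠ r₃) (h₂₃ : r₂ ≠ r₃)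
    (hr₁ : b * r₁ ^ 3 + c * r₁ ^ 2 + d * r₁ + e = 0)
    (hr₂ : b * r₂ ^ 3 + c * r₂ ^ 2 + d * r₂ + e = 0)
    (hr₃ : b * r₃ ^ 3 + c * r₃ ^ 2 + d * r₃ + e = 0) :
    c = -b * (r₁ + r₂ + r₃) ∧ d = b * (r₁ * r₂ + r₁ * r₃ + r₂ * r₃) ∧
      e = -b * (r₁ * r₂ * r₃) := by
  -- divided differences of the cubic through its roots
  have h₁₂' : b * (r₁ ^ 2 + r₁ * r₂ + r₂ ^ 2) + c * (r₁ + r₂) + d = 0 := by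
    refine (mul_eq_zero.mp ?_).resolve_left (sub_ne_zero.mpr h₁₂)
    linear_combination hr₁ - hr₂
  have h₁₃' : b * (r₁ ^ 2 + r₁ * r₃ + r₃ ^ 2) + c * (r₁ + r₃) + d = 0 := by
    refine (mul_eq_zero.mp ?_).resolve_left (sub_ne_zero.mpr h₁₃)
    linear_combination hr₁ - hr₃
  have hc : b * (r₁ + r₂ + r₃) + c = 0 := by
    refine (mul_eq_zero.mp ?_).resolve_left (sub_ne_zero.mpr h₂₃)
    linear_combination h₁₂' - h₁₃'
  refine ⟨by linear_combination hc, ?_, ?_⟩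
  · linear_combination h₁₂' - (r₁ + r₂) * hc
  · linear_combination hr₁ - r₁ ^ 2 * hc - r₁ * (h₁₂' - (r₁ + r₂) * hc)

theorem cubic_eq_mul_sub_of_roots (h₁₂ : r₁ ≠ r₂) (h₁₃ : r₁ ≠ r₃) (h₂₃ : r₂ ≠ r₃)
    (hr₁ : b * r₁ ^ 3 + c * r₁ ^ 2 + d * r₁ + e = 0)
    (hr₂ : b * r₂ ^ 3 + c * r₂ ^ 2 + d * r₂ + e = 0)
    (hr₃ : b * r₃ ^ 3 + c * r₃ ^ 2 + d * r₃ + e = 0) (x : K) :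
    b * x ^ 3 + c * x ^ 2 + d * x + e = b * (x - r₁) * (x - r₂) * (x - r₃) := by
  obtain ⟨hc, hd, he⟩ := cubic_vieta h₁₂ h₁₃ h₂₃ hr₁ hr₂ hr₃
  linear_combination x ^ 2 * hc + x * hd + he

end Vieta

theorem critical_points_sign {A B x₁ x₂ x₃ : ℝ} (hB : 0 < B) (h₁₂ : x₁ < x₂) (h₂₃ : x₂ < x₃)
    (hx₁ : 2 * B * x₁ ^ 3 + A * x₁ ^ 2 - 1 = 0) (hx₂ : 2 * B * x₂ ^ 3 + A * x₂ ^ 2 - 1 = 0)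
    (hx₃ : 2 * B * x₃ ^ 3 + A * x₃ ^ 2 - 1 = 0) : x₂ < 0 ∧ 0 < x₃ := by
  obtain ⟨-, hsym₂, hprod⟩ := cubic_vieta (b := 2 * B) (c := A) (d := 0) (e := -1)
    h₁₂.ne (h₁₂.trans h₂₃).ne h₂₃.ne (by linear_combination hx₁) (by linear_combination hx₂)
    (by linear_combination hx₃)
  have hprod_pos : 0 < x₁ * x₂ * x₃ := by
    have : 2 * B * (x₁ * x₂ * x₃) = 1 := by linear_combination hprod
    nlinarith
  have hx₂_neg : x₂ < 0 := by
    by_contra! hx₂_nonneg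
    -- all three roots would be positive, against `x₁x₂ + x₁x₃ + x₂x₃ = 0`
    have hx₃_pos : 0 < x₃ := by linarith
    have hx₁₂ : 0 < x₁ * x₂ := pos_of_mul_pos_left hprod_pos hx₃_pos.le
    have hx₂_pos : 0 < x₂ := by nlinarith
    have hx₁_pos : 0 < x₁ := pos_of_mul_pos_left hx₁₂ hx₂_pos.le
    nlinarith [mul_pos hx₁_pos hx₃_pos, mul_pos hx₂_pos hx₃_pos]
  refine ⟨hx₂_neg, ?_⟩
  have hx₁₂ : 0 < x₁ * x₂ := mul_pos_of_neg_of_neg (h₁₂.trans hx₂_neg) hx₂_neg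
  exact pos_of_mul_pos_right hprod_pos hx₁₂.le

theorem tendsto_cubic_atTop {b : ℝ} (hb : 0 < b) (c d e : ℝ) :
    Tendsto (fun x : ℝ ↦ b * x ^ 3 + c * x ^ 2 + d * x + e) atTop atTop := by
  have h := tendsto_atTop_of_leadingCoeff_nonneg (C b * X ^ 3 + C c * X ^ 2 + C d * X + C e)
    (by rw [degree_cubic hb.ne']; norm_num) (by rw [leadingCoeff_cubic hb.ne']; exact hb.le)
  simpa using h

theorem exists_gt_cubic_pos {b : ℝ} (hb : 0 < b) (c d e x₀ : ℝ) :
    ∃ x, x₀ < x ∧ 0 < b * x ^ 3 + c * x ^ 2 + d * x + e :=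
  ((eventually_gt_atTop x₀).and ((tendsto_cubic_atTop hb c d e).eventually_gt_atTop 0)).exists

theorem exists_lt_cubic_neg {b : ℝ} (hb : 0 < b) (c d e x₀ : ℝ) :
    ∃ x, x < x₀ ∧ b * x ^ 3 + c * x ^ 2 + d * x + e < 0 := by
  obtain ⟨y, hy, hpos⟩ := exists_gt_cubic_pos hb (-c) d (-e) (-x₀)
  exact ⟨-y, by linarith, by linear_combination hpos⟩

theorem exists_three_roots_of_sign_changes {f : ℝ → ℝ} (hf : Continuous f) {a b c d : ℝ}
    (hab : a < b) (hbc : b < c) (hcd : c < d)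
    (ha : f a < 0) (hb : 0 < f b) (hc : f c < 0) (hd : 0 < f d) :
    ∃ r₁ r₂ r₃, r₁ < r₂ ∧ r₂ < r₃ ∧ f r₁ = 0 ∧ f r₂ = 0 ∧ f r₃ = 0 := by
  obtain ⟨r₁, hr₁, hf₁⟩ := intermediate_value_Ioo hab.le hf.continuousOn ⟨ha, hb⟩
  obtain ⟨r₂, hr₂, hf₂⟩ := intermediate_value_Ioo' hbc.le hf.continuousOn ⟨hc, hb⟩
  obtain ⟨r₃, hr₃, hf₃⟩ := intermediate_value_Ioo hcd.le hf.continuousOn ⟨hc, hd⟩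
  exact ⟨r₁, r₂, r₃, hr₁.2.trans hr₂.1, hr₂.2.trans hr₃.1, hf₁, hf₂, hf₃⟩

theorem exists_real_roots_factorization_of_sign_changes {b c d e a₁ a₂ a₃ a₄ : ℝ}
    (h₁₂ : a₁ < a₂) (h₂₃ : a₂ < a₃) (h₃₄ : a₃ < a₄)
    (h₁ : b * a₁ ^ 3 + c * a₁ ^ 2 + d * a₁ + e < 0) (h₂ : 0 < b * a₂ ^ 3 + c * a₂ ^ 2 + d * a₂ + e)
    (h₃ : b * a₃ ^ 3 + c * a₃ ^ 2 + d * a₃ + e < 0) (h₄ : 0 < b * a₄ ^ 3 + c * a₄ ^ 2 + d * a₄ + e) :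
    ∃ r₁ r₂ r₃ : ℝ, ∀ z : ℂ, (b : ℂ) * z ^ 3 + c * z ^ 2 + d * z + e =
      b * (z - r₁) * (z - r₂) * (z - r₃) := by
  obtain ⟨r₁, r₂, r₃, hr₁₂, hr₂₃, hr₁, hr₂, hr₃⟩ :=
    exists_three_roots_of_sign_changes (f := fun x ↦ b * x ^ 3 + c * x ^ 2 + d * x + e)
      (by fun_prop) h₁₂ h₂₃ h₃₄ h₁ h₂ h₃ h₄
  refine ⟨r₁, r₂, r₃, cubic_eq_mul_sub_of_roots ?_ ?_ ?_ ?_ ?_ ?_⟩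
  · exact_mod_cast hr₁₂.ne
  · exact_mod_cast (hr₁₂.trans hr₂₃).ne
  · exact_mod_cast hr₂₃.ne
  · exact_mod_cast hr₁
  · exact_mod_cast hr₂
  · exact_mod_cast hr₃

theorem cubic_eq_mul_charFun_sub (A B E : ℝ) {x : ℝ} (hx : x ≠ 0) :
    B * x ^ 3 + A * x ^ 2 + -E * x + 1 = x * (1 / x + A * x + B * x ^ 2 - E) := by
  field_simp
  ring

theorem all_roots_real_outside_general (A B : ℝ) (hB : 0 < B)
    (x₁ x₂ x₃ : ℝ) (h12 : x₁ < x₂) (h23 : x₂ < x₃)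
    (hroots : ∀ x : ℝ, 2 * B * x ^ 3 + A * x ^ 2 - 1 = 0 ↔ (x = x₁ ∨ x = x₂ ∨ x = x₃))
    (E : ℝ)
    (hE : (1 / x₁ + A * x₁ + B * x₁ ^ 2 < E ∧ E < 1 / x₂ + A * x₂ + B * x₂ ^ 2) ∨
      1 / x₃ + A * x₃ + B * x₃ ^ 2 < E) :
    ∃ r₁ r₂ r₃ : ℝ, ∀ z : ℂ,
      (B : ℂ) * z ^ 3 + (A : ℂ) * z ^ 2 - (E : ℂ) * z + 1 =
        (B : ℂ) * (z - (r₁ : ℂ)) * (z - (r₂ : ℂ)) * (z - (r₃ : ℂ)) := by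
  obtain ⟨hx₂, hx₃⟩ := critical_points_sign hB h12 h23 ((hroots x₁).2 (by simp))
    ((hroots x₂).2 (by simp)) ((hroots x₃).2 (by simp))
  have hx₁ : x₁ < 0 := h12.trans hx₂
  suffices ∃ r₁ r₂ r₃ : ℝ, ∀ z : ℂ, (B : ℂ) * z ^ 3 + A * z ^ 2 + (-E : ℝ) * z + (1 : ℝ) =
      B * (z - r₁) * (z - r₂) * (z - r₃) by
    obtain ⟨r₁, r₂, r₃, h⟩ := this
    exact ⟨r₁, r₂, r₃, fun z ↦ by rw [← h z]; push_cast; ring⟩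
  obtain ⟨a, ha, hqa⟩ := exists_lt_cubic_neg hB A (-E) 1 (min x₁ 0)
  rcases hE with ⟨hE₁, hE₂⟩ | hE₃
  · refine exists_real_roots_factorization_of_sign_changes (a₂ := x₁) (a₃ := x₂) (a₄ := 0)
      (lt_min_iff.mp ha).1 h12 hx₂ hqa ?_ ?_ (by norm_num)
    · rw [cubic_eq_mul_charFun_sub A B E hx₁.ne]
      exact mul_pos_of_neg_of_neg hx₁ (by linarith)
    · rw [cubic_eq_mul_charFun_sub A B E hx₂.ne]
      exact mul_neg_of_neg_of_pos hx₂ (by linarith)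
  · obtain ⟨d, hd, hqd⟩ := exists_gt_cubic_pos hB A (-E) 1 x₃
    refine exists_real_roots_factorization_of_sign_changes (a₂ := 0) (a₃ := x₃)
      (lt_min_iff.mp ha).2 hx₃ hd hqa (by norm_num) ?_ hqd
    rw [cubic_eq_mul_charFun_sub A B E hx₃.ne']
    exact mul_neg_of_pos_of_neg hx₃ (by linarith)

/-- Let `B > 0`, `A³ > 27B²`, and let `x₁ < x₂ < x₃` be the three real roots of
`2Bx³ + Ax² − 1 = 0`. For every real `E` with `g(x₁) < E < g(x₂)`, and also for
every real `E > g(x₃)` (where `g(x) = 1/x + Ax + Bx²`), all three roots of the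
cubic `Q_E(z) = Bz³ + Az² − Ez + 1` are real. -/
theorem all_roots_real_outside (A B : ℝ) (hB : 0 < B)
    (h : A ^ 3 > 27 * B ^ 2)
    (x₁ x₂ x₃ : ℝ) (h12 : x₁ < x₂) (h23 : x₂ < x₃)
    (hroots : ∀ x : ℝ, 2 * B * x ^ 3 + A * x ^ 2 - 1 = 0 ↔ (x = x₁ ∨ x = x₂ ∨ x = x₃))
    (E : ℝ)
    (hE : (1 / x₁ + A * x₁ + B * x₁ ^ 2 < E ∧ E < 1 / x₂ + A * x₂ + B * x₂ ^ 2) ∨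
      1 / x₃ + A * x₃ + B * x₃ ^ 2 < E) :
    ∃ r₁ r₂ r₃ : ℝ, ∀ z : ℂ,
      (B : ℂ) * z ^ 3 + (A : ℂ) * z ^ 2 - (E : ℂ) * z + 1 =
        (B : ℂ) * (z - (r₁ : ℂ)) * (z - (r₂ : ℂ)) * (z - (r₃ : ℂ)) :=
  all_roots_real_outside_general A B hB x₁ x₂ x₃ h12 h23 hroots E hE
end

section
/- Let A, B ∈ ℝ with B > 0 and A³ > 27B², and let x₁ < x₂ < x₃ be the three real roots of 2Bx³ + Ax² − 1 = 0. For every real E with E < g(x₁), the cubic Q_E(z) = Bz³ + Az² − Ez + 1 has exactly one real root r and a pair of nonreal complex-conjugate roots w and w̄, and these satisfy |r| < |w| = |w̄|; in particular the two largest-modulus roots have equal modulus while the GBZ condition |β₁| = |β₂| fails. -/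
/-!
Vieta's relations for the critical cubic `2Bx³ + Ax² − 1` (`e₁ = −A/(2B)`, `e₂ = 0`,
`e₃ = 1/(2B)`) force `x₁ < x₂ < 0 < x₃` and `3Bx₂ + A > 0`. Since `x₁` is critical,
`Q_E(x) = (x − x₁)²(Bx + A + 2Bx₁) + x(g(x₁) − E)`, which is negative for `x ≤ x₂`; hence
`Q_E` has a root `r ∈ (x₂, 0)` and no real root `≤ x₂`. The quotient `Q_E(z)/(z − r)` then
has negative discriminant, for otherwise it would have a root left of its vertex
`−(A + Br)/(2B) < x₂`; so the remaining roots are a conjugate pair `w, w̄`. Finally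
`B r |w|² = −1` and `B r³ > B x₂³ > −1` give `r² < |w|²`.
-/

open ComplexConjugate

theorem cubic_vieta_s17 {K : Type*} [Field K] {a b c d x y z : K}
    (hxy : x ≠ y) (hxz : x ≠ z) (hyz : y ≠ z)
    (hx : a * x ^ 3 + b * x ^ 2 + c * x + d = 0) (hy : a * y ^ 3 + b * y ^ 2 + c * y + d = 0)
    (hz : a * z ^ 3 + b * z ^ 2 + c * z + d = 0) :
    a * (x + y + z) = -b ∧ a * (x * y + x * z + y * z) = c ∧ a * (x * y * z) = -d := by
  have hxy' : a * (x ^ 2 + x * y + y ^ 2) + b * (x + y) + c = 0 :=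
    mul_left_cancel₀ (sub_ne_zero.2 hxy) (by linear_combination hx - hy)
  have hyz' : a * (y ^ 2 + y * z + z ^ 2) + b * (y + z) + c = 0 :=
    mul_left_cancel₀ (sub_ne_zero.2 hyz) (by linear_combination hy - hz)
  have e₁ : a * (x + y + z) = -b :=
    mul_left_cancel₀ (sub_ne_zero.2 hxz) (by linear_combination hxy' - hyz')
  have e₂ : a * (x * y + x * z + y * z) = c := by linear_combination (x + y) * e₁ - hxy'
  exact ⟨e₁, e₂, by linear_combination hx - x ^ 2 * e₁ + x * e₂⟩

theorem discrim_neg_of_forall_root_gt {a b c m : ℝ} (ha : 0 < a) (hm : 0 ≤ 2 * a * m + b)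
    (h : ∀ x, a * x ^ 2 + b * x + c = 0 → m < x) : discrim a b c < 0 := by
  by_contra! hD
  set s := √(discrim a b c)
  have hs : discrim a b c = s * s := (Real.mul_self_sqrt hD).symm
  have hroot := (quadratic_eq_zero_iff ha.ne' hs ((-b - s) / (2 * a))).2 (Or.inr rfl)
  have hlt := h _ (by rw [sq]; exact hroot)
  rw [lt_div_iff₀ (by positivity)] at hlt
  nlinarith [Real.sqrt_nonneg (discrim a b c)]

theorem exists_conj_factor_of_discrim_neg {a b c : ℝ} (ha : a ≠ 0) (h : discrim a b c < 0) :
    ∃ w : ℂ, w.im ≠ 0 ∧ a * ‖w‖ ^ 2 = c ∧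
      ∀ z : ℂ, (a : ℂ) * z ^ 2 + b * z + c = a * (z - w) * (z - conj w) := by
  set w : ℂ := ⟨-b / (2 * a), √(-discrim a b c) / (2 * a)⟩
  have him : w.im ≠ 0 := div_ne_zero (Real.sqrt_pos.2 (neg_pos.2 h)).ne' (by simpa)
  have hnorm : a * ‖w‖ ^ 2 = c := by
    rw [Complex.sq_norm, Complex.normSq_apply, ← sq, ← sq, div_pow, div_pow,
      Real.sq_sqrt (neg_pos.2 h).le, discrim]
    field_simp
    ring
  refine ⟨w, him, hnorm, fun z => ?_⟩
  have hsum : (a : ℂ) * (w + conj w) = -b := by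
    rw [Complex.add_conj, ← Complex.ofReal_mul, ← Complex.ofReal_neg]
    congr 1
    simp only [w]
    field_simp
  have hprod : (a : ℂ) * (w * conj w) = c := by
    rw [Complex.mul_conj, ← Complex.sq_norm]
    exact_mod_cast hnorm
  linear_combination z * hsum - hprod

theorem cubic_eq_sub_mul_quadratic {R : Type*} [CommRing R] {A B E r : R}
    (hr : B * r ^ 3 + A * r ^ 2 - E * r + 1 = 0) (z : R) :
    B * z ^ 3 + A * z ^ 2 - E * z + 1 =
      (z - r) * (B * z ^ 2 + (A + B * r) * z + (B * r ^ 2 + A * r - E)) := by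
  linear_combination hr

section CriticalPoints

variable {A B x₁ x₂ x₃ : ℝ}

theorem critical_vieta (hB : B ≠ 0) (h12 : x₁ ≠ x₂) (h13 : x₁ ≠ x₃) (h23 : x₂ ≠ x₃)
    (hx₁ : 2 * B * x₁ ^ 3 + A * x₁ ^ 2 - 1 = 0) (hx₂ : 2 * B * x₂ ^ 3 + A * x₂ ^ 2 - 1 = 0)
    (hx₃ : 2 * B * x₃ ^ 3 + A * x₃ ^ 2 - 1 = 0) :
    2 * B * (x₁ + x₂ + x₃) = -A ∧ x₁ * x₂ + x₁ * x₃ + x₂ * x₃ = 0 ∧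
      2 * B * (x₁ * x₂ * x₃) = 1 := by
  obtain ⟨e₁, e₂, e₃⟩ := cubic_vieta_s17 (a := 2 * B) (b := A) (c := 0) (d := -1) h12 h13 h23
    (by linear_combination hx₁) (by linear_combination hx₂) (by linear_combination hx₃)
  exact ⟨e₁, (mul_eq_zero.1 e₂).resolve_left (by simpa), by linear_combination e₃⟩

theorem mid_neg_of_vieta (h23 : x₂ < x₃)
    (he₂ : x₁ * x₂ + x₁ * x₃ + x₂ * x₃ = 0) (he₃ : 0 < x₁ * x₂ * x₃) : x₂ < 0 := by
  by_contra! hx₂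
  have hx₂' : 0 < x₂ := hx₂.lt_of_ne (by rintro rfl; simp at he₃)
  have hx₂₃ : 0 < x₂ * x₃ := mul_pos hx₂' (hx₂'.trans h23)
  have hx₁ : 0 < x₁ := pos_of_mul_pos_left (by linarith : 0 < x₁ * (x₂ * x₃)) hx₂₃.le
  nlinarith [mul_pos hx₁ hx₂']

theorem inflection_lt_mid (hB : 0 < B) (h12 : x₁ < x₂) (h23 : x₂ < x₃) (hx₂ : x₂ < 0)
    (he₁ : 2 * B * (x₁ + x₂ + x₃) = -A) (he₂ : x₁ * x₂ + x₁ * x₃ + x₂ * x₃ = 0) :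
    0 < 3 * B * x₂ + A := by
  have hderiv : x₂ * (3 * B * x₂ + A) = B * (x₂ - x₁) * (x₂ - x₃) := by
    linear_combination x₂ * he₁ - B * he₂
  have hneg : B * (x₂ - x₁) * (x₂ - x₃) < 0 :=
    mul_neg_of_pos_of_neg (by nlinarith) (by linarith)
  exact pos_of_mul_neg_right (hderiv ▸ hneg) hx₂.le

theorem critical_slope_neg (hB : 0 < B) (h12 : x₁ < x₂) (hx₂ : x₂ < 0)
    (he₁ : 2 * B * (x₁ + x₂ + x₃) = -A) (he₂ : x₁ * x₂ + x₁ * x₃ + x₂ * x₃ = 0) :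
    B * x₂ + A + 2 * B * x₁ < 0 := by
  have hx₃ : 0 < x₂ + 2 * x₃ := by
    have hfactor : (x₁ + x₂) * (x₂ + 2 * x₃) = x₂ * (x₂ - x₁) := by linear_combination 2 * he₂
    nlinarith
  nlinarith

end CriticalPoints

theorem neg_one_lt_mul_cube {A B x : ℝ} (hx : 2 * B * x ^ 3 + A * x ^ 2 - 1 = 0) (hx₀ : x ≠ 0)
    (hinfl : 0 < 3 * B * x + A) : -1 < B * x ^ 3 := by
  nlinarith [mul_pos hinfl (sq_pos_of_ne_zero hx₀)]

theorem cubic_neg_of_le {A B E x₁ x : ℝ} (hx₁ : 2 * B * x₁ ^ 3 + A * x₁ ^ 2 - 1 = 0)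
    (hx₁₀ : x₁ ≠ 0) (hE : E < 1 / x₁ + A * x₁ + B * x₁ ^ 2) (hx : x < 0)
    (hslope : B * x + A + 2 * B * x₁ ≤ 0) : B * x ^ 3 + A * x ^ 2 - E * x + 1 < 0 := by
  have hg : 1 / x₁ + A * x₁ + B * x₁ ^ 2 = 3 * B * x₁ ^ 2 + 2 * A * x₁ := by
    field_simp
    linear_combination -hx₁
  have hkey : B * x ^ 3 + A * x ^ 2 - E * x + 1 =
      (x - x₁) ^ 2 * (B * x + A + 2 * B * x₁) + x * (3 * B * x₁ ^ 2 + 2 * A * x₁ - E) := by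
    linear_combination -hx₁
  rw [hkey]
  nlinarith [mul_nonpos_of_nonneg_of_nonpos (sq_nonneg (x - x₁)) hslope]

theorem exists_root_Ioo_of_neg {A B E m : ℝ} (hm : m < 0)
    (hneg : B * m ^ 3 + A * m ^ 2 - E * m + 1 < 0) :
    ∃ r ∈ Set.Ioo m 0, B * r ^ 3 + A * r ^ 2 - E * r + 1 = 0 :=
  intermediate_value_Ioo hm.le (by fun_prop) ⟨hneg, by simp⟩

theorem abs_lt_norm_of_mul_norm_sq {B r : ℝ} {w : ℂ} (hB : 0 ≤ B) (hr : r < 0)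
    (hcube : -1 < B * r ^ 3) (hprod : B * r * ‖w‖ ^ 2 = -1) : |r| < ‖w‖ := by
  refine abs_lt_of_sq_lt_sq ?_ (norm_nonneg w)
  by_contra! hle
  nlinarith [mul_le_mul_of_nonneg_left hle (mul_nonneg hB (neg_nonneg.2 hr.le))]

theorem gbz_condition_fails_below_general (A B : ℝ) (hB : 0 < B)
    (x₁ x₂ x₃ : ℝ) (h12 : x₁ < x₂) (h23 : x₂ < x₃)
    (hroots : ∀ x : ℝ, 2 * B * x ^ 3 + A * x ^ 2 - 1 = 0 ↔ (x = x₁ ∨ x = x₂ ∨ x = x₃))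
    (E : ℝ) (hE : E < 1 / x₁ + A * x₁ + B * x₁ ^ 2) :
    ∃ r : ℝ, ∃ w : ℂ, w.im ≠ 0 ∧
      (∀ z : ℂ, (B : ℂ) * z ^ 3 + (A : ℂ) * z ^ 2 - (E : ℂ) * z + 1 =
        (B : ℂ) * (z - (r : ℂ)) * (z - w) * (z - (starRingEnd ℂ) w)) ∧
      ‖w‖ = ‖(starRingEnd ℂ) w‖ ∧
      |r| < ‖w‖ := by
  have hx₁ := (hroots x₁).2 (by simp)
  have hx₂ := (hroots x₂).2 (by simp)
  obtain ⟨e₁, e₂, e₃⟩ := critical_vieta hB.ne' h12.ne (h12.trans h23).ne h23.ne hx₁ hx₂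
    ((hroots x₃).2 (by simp))
  have hx₂neg : x₂ < 0 :=
    mid_neg_of_vieta h23 e₂ (pos_of_mul_pos_right (e₃ ▸ one_pos) (by positivity))
  have hinfl := inflection_lt_mid hB h12 h23 hx₂neg e₁ e₂
  have hQneg : ∀ x ≤ x₂, B * x ^ 3 + A * x ^ 2 - E * x + 1 < 0 := fun x hx =>
    cubic_neg_of_le hx₁ (h12.trans hx₂neg).ne hE (by linarith)
      (by nlinarith [critical_slope_neg hB h12 hx₂neg e₁ e₂])
  obtain ⟨r, ⟨hx₂r, hr₀⟩, hr⟩ := exists_root_Ioo_of_neg hx₂neg (hQneg x₂ le_rfl)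
  have hD : discrim B (A + B * r) (B * r ^ 2 + A * r - E) < 0 :=
    discrim_neg_of_forall_root_gt hB (m := x₂) (by nlinarith) fun x hx => not_le.1 fun hle =>
      (hQneg x hle).ne (by rw [cubic_eq_sub_mul_quadratic hr, hx, mul_zero])
  obtain ⟨w, hw, hnorm, hfac⟩ := exists_conj_factor_of_discrim_neg hB.ne' hD
  refine ⟨r, w, hw, fun z => ?_, (Complex.norm_conj w).symm, ?_⟩
  · have hrC : (B : ℂ) * r ^ 3 + A * r ^ 2 - E * r + 1 = 0 := by exact_mod_cast hr
    push_cast at hfac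
    rw [cubic_eq_sub_mul_quadratic hrC, hfac]
    ring
  · have hcube : -1 < B * r ^ 3 := (neg_one_lt_mul_cube hx₂ hx₂neg.ne hinfl).trans
      (mul_lt_mul_of_pos_left ((Odd.pow_lt_pow (by decide)).2 hx₂r) hB)
    exact abs_lt_norm_of_mul_norm_sq hB.le hr₀ hcube (by linear_combination r * hnorm + hr)

/-- Let `B > 0`, `A³ > 27B²`, and let `x₁ < x₂ < x₃` be the three real roots of
`2Bx³ + Ax² − 1 = 0`. For every real `E < g(x₁)` (where `g(x) = 1/x + Ax + Bx²`),
the cubic `Q_E(z) = Bz³ + Az² − Ez + 1` has exactly one real root `r` and a pair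
of nonreal complex-conjugate roots `w, w̄`, with `|r| < |w| = |w̄|`: the two
largest-modulus roots have equal modulus while the GBZ condition `|β₁| = |β₂|`
fails. -/
theorem gbz_condition_fails_below (A B : ℝ) (hB : 0 < B)
    (h : A ^ 3 > 27 * B ^ 2)
    (x₁ x₂ x₃ : ℝ) (h12 : x₁ < x₂) (h23 : x₂ < x₃)
    (hroots : ∀ x : ℝ, 2 * B * x ^ 3 + A * x ^ 2 - 1 = 0 ↔ (x = x₁ ∨ x = x₂ ∨ x = x₃))
    (E : ℝ) (hE : E < 1 / x₁ + A * x₁ + B * x₁ ^ 2) :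
    ∃ r : ℝ, ∃ w : ℂ, w.im ≠ 0 ∧
      (∀ z : ℂ, (B : ℂ) * z ^ 3 + (A : ℂ) * z ^ 2 - (E : ℂ) * z + 1 =
        (B : ℂ) * (z - (r : ℂ)) * (z - w) * (z - (starRingEnd ℂ) w)) ∧
      ‖w‖ = ‖(starRingEnd ℂ) w‖ ∧
      |r| < ‖w‖ :=
  gbz_condition_fails_below_general A B hB x₁ x₂ x₃ h12 h23 hroots E hE
end
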